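/- arXiv:1312.6564 — 4 statements merged into one kernel-verified Lean document; each statement's English description precedes it below -/
import Mathlib

section
/- Let h ≥ 1 and x : Fin (2^h) → ZMod 2. Then x satisfies the equations ∑_{i} x i = 1 (in ZMod 2) together with the parity-restricted quadratic equations x i * x j = 0 for all pairs i ≠ j with i.val % 2 = j.val % 2, if and only if there exists exactly one index i : Fin (2^h) with x i = 1. (The parity-restricted equations force at most one coordinate equal to 1 among the even-indexed positions and at most one among the odd-indexed positions, and the linear equation then forces exactly one coordinate equal to 1 overall.) -/
/-!
Over `ZMod 2` the sum of the coordinates is the parity of the number of ones, and the quadratic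
equations say exactly that `i ↦ i % 2` is injective on the set of ones. An injective map into
the two parities allows at most two ones; an odd number of them at most two is exactly one.
-/

open Finset

namespace ZMod

lemma eq_ite_eq_one (a : ZMod 2) : a = if a = 1 then 1 else 0 := by
  revert a; decide

lemma mul_eq_zero_iff_not_both_one {a b : ZMod 2} : a * b = 0 ↔ ¬(a = 1 ∧ b = 1) := by
  revert a b; decide

lemma sum_eq_card_filter_eq_one {ι : Type*} [Fintype ι] (x : ι → ZMod 2) :
    ∑ i, x i = #{i | x i = 1} := by
  conv_lhs => enter [2, i]; rw [eq_ite_eq_one (x i)]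
  rw [sum_boole]

end ZMod

lemma forall_mul_eq_zero_iff_injOn {ι β : Type*} (x : ι → ZMod 2) (p : ι → β) :
    (∀ i j, i ≠ j → p i = p j → x i * x j = 0) ↔ Set.InjOn p {i | x i = 1} := by
  simp only [ZMod.mul_eq_zero_iff_not_both_one, Set.InjOn, Set.mem_ofPred_eq]
  grind

lemma Finset.card_eq_one_iff_cast_eq_one_and_injOn {ι β : Type*} {s : Finset ι} {t : Finset β}
    {p : ι → β} (hp : Set.MapsTo p s t) (ht : #t ≤ 2) :
    ((#s : ZMod 2) = 1 ∧ Set.InjOn p s) ↔ #s = 1 := by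
  constructor
  · rintro ⟨hodd, hinj⟩
    have : #s ≤ 2 := (card_le_card_of_injOn p hp hinj).trans ht
    interval_cases #s <;> revert hodd <;> decide
  · intro hs
    exact ⟨by simp [hs], (card_le_one_iff_subsingleton.mp hs.le).injOn p⟩

theorem sum_one_and_parity_products_zero_iff_exists_unique_general
    (h : ℕ) (x : Fin (2 ^ h) → ZMod 2) :
    ((∑ i : Fin (2 ^ h), x i = 1) ∧
      (∀ i j : Fin (2 ^ h), i ≠ j → i.val % 2 = j.val % 2 → x i * x j = 0)) ↔
    (∃! i : Fin (2 ^ h), x i = 1) := by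
  have hparity : Set.MapsTo (fun i : Fin (2 ^ h) => i.val % 2) ↑({i | x i = 1} : Finset _)
      ↑(range 2) := fun i _ => by simpa using Nat.mod_lt _ two_pos
  rw [ZMod.sum_eq_card_filter_eq_one, forall_mul_eq_zero_iff_injOn,
    Fintype.existsUnique_iff_card_one,
    ← card_eq_one_iff_cast_eq_one_and_injOn hparity (card_range 2).le, coe_filter_univ]

/-- With the linear block-sum equation, the parity-restricted
quadratic equations already force exactly one coordinate equal to 1. -/
theorem sum_one_and_parity_products_zero_iff_exists_unique
    (h : ℕ) (hh : 1 ≤ h) (x : Fin (2 ^ h) → ZMod 2) :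
    ((∑ i : Fin (2 ^ h), x i = 1) ∧
      (∀ i j : Fin (2 ^ h), i ≠ j → i.val % 2 = j.val % 2 → x i * x j = 0)) ↔
    (∃! i : Fin (2 ^ h), x i = 1) :=
  sum_one_and_parity_products_zero_iff_exists_unique_general h x
end

section
/- Let h ≥ 1 and x : Fin (2^h) → ZMod 2 with ∑_{i} x i = 1 in ZMod 2. Then x satisfies x i * x j = 0 for all pairs i ≠ j if and only if x satisfies x i * x j = 0 for all pairs i ≠ j with i.val % 2 = j.val % 2. That is, in the presence of the linear block-sum equation, the full set of quadratic equations over all pairs may be replaced by the smaller set of quadratic equations restricted to pairs of indices of equal parity, without changing the solution set. -/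
/-!
If two coordinates `x i = x j = 1` with `i ≠ j` violate a quadratic equation, the restricted
equations force every other coordinate to vanish, since any third index shares its class with
`i` or with `j`. The block sum is then `x i + x j = 1 + 1 = 0` in `ZMod 2`, contradicting the
linear equation.
-/

theorem ZMod.two_add_eq_zero_of_ne_zero {a b : ZMod 2} (ha : a ≠ 0) (hb : b ≠ 0) :
    a + b = 0 := by
  revert a b
  decide

theorem pairwise_mul_eq_zero_of_sum_eq_one {ι : Type*} [Fintype ι] (r : ι → ι → Prop)
    (hr : ∀ i j k, ¬ r i j → r k i ∨ r k j) (x : ι → ZMod 2) (hsum : ∑ i, x i = 1)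
    (hx : ∀ i j, i ≠ j → r i j → x i * x j = 0) :
    ∀ i j, i ≠ j → x i * x j = 0 := by
  intro i j hij
  by_contra hne
  obtain ⟨hxi, hxj⟩ := mul_ne_zero_iff.mp hne
  have hrij : ¬ r i j := fun h => hne (hx i j hij h)
  have hrest : ∀ k, k ≠ i ∧ k ≠ j → x k = 0 := by
    rintro k ⟨hki, hkj⟩
    rcases hr i j k hrij with hk | hk
    · exact (mul_eq_zero.mp (hx k i hki hk)).resolve_right hxi
    · exact (mul_eq_zero.mp (hx k j hkj hk)).resolve_right hxj
  rw [Fintype.sum_eq_add i j hij hrest, ZMod.two_add_eq_zero_of_ne_zero hxi hxj] at hsum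
  exact zero_ne_one hsum

theorem full_quadratics_iff_parity_quadratics_general
    (h : ℕ) (x : Fin (2 ^ h) → ZMod 2)
    (hsum : ∑ i : Fin (2 ^ h), x i = 1) :
    (∀ i j : Fin (2 ^ h), i ≠ j → x i * x j = 0) ↔
    (∀ i j : Fin (2 ^ h), i ≠ j → i.val % 2 = j.val % 2 → x i * x j = 0) :=
  ⟨fun hx i j hij _ => hx i j hij,
    pairwise_mul_eq_zero_of_sum_eq_one (fun i j => i.val % 2 = j.val % 2) (by omega) x hsum⟩

/-- In the presence of the linear block-sum equation, the full
set of quadratic equations is equivalent to the parity-restricted set. -/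
theorem full_quadratics_iff_parity_quadratics
    (h : ℕ) (hh : 1 ≤ h) (x : Fin (2 ^ h) → ZMod 2)
    (hsum : ∑ i : Fin (2 ^ h), x i = 1) :
    (∀ i j : Fin (2 ^ h), i ≠ j → x i * x j = 0) ↔
    (∀ i j : Fin (2 ^ h), i ≠ j → i.val % 2 = j.val % 2 → x i * x j = 0) :=
  full_quadratics_iff_parity_quadratics_general h x hsum
end

section
/- Let k ≥ 1, s ≥ 1 and n = 2·k·s, and set m = s·(2s − 1) (equivalently, m = n·(n − k)/(2·k²)). Let f : (Fin n → ZMod 2) → ZMod 2 be any quadratic polynomial function of the form f(x) = ∑_{i < j} a i j * x i * x j + ∑_{i} b i * x i, with coefficients a : Fin n → Fin n → ZMod 2 and b : Fin n → ZMod 2. Then there exist m subsets S₁, …, S_m of Fin n, each of cardinality at most 2·k, and m functions g₁, …, g_m : (Fin n → ZMod 2) → ZMod 2, such that f = ∑_{t=1}^{m} g_t and each g_t depends only on the coordinates in S_t (i.e. for all u, v : Fin n → ZMod 2, if u i = v i for all i ∈ S_t, then g_t u = g_t v). -/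
/-! Cut the `n = 2ks` variables into `2s` half-blocks of `k` consecutive variables. Every
monomial `xᵢ xⱼ` or `xᵢ` involves at most two half-blocks, so it depends only on the variables
of some pair of distinct half-blocks, and such a pair has at most `2k` variables. Grouping the
monomials by the pair they are assigned to writes `f` as a sum of `(2s).choose 2 = s(2s - 1)`
functions, one per pair. -/

open Finset

def HasLocalDecomposition {ι τ R M : Type*} [Fintype τ] [AddCommMonoid M]
    (f : (ι → R) → M) (S : τ → Set ι) : Prop :=
  ∃ g : τ → (ι → R) → M, (∀ x, f x = ∑ t, g t x) ∧ ∀ t, DependsOn (g t) (S t)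

namespace HasLocalDecomposition

variable {ι τ τ' R M : Type*} [Fintype τ] [Fintype τ'] [AddCommMonoid M] {S : τ → Set ι}

lemma zero : HasLocalDecomposition (fun _ : ι → R => (0 : M)) S :=
  ⟨fun _ _ => 0, fun _ => by simp, fun _ _ _ _ => rfl⟩

lemma add {f₁ f₂ : (ι → R) → M} (h₁ : HasLocalDecomposition f₁ S)
    (h₂ : HasLocalDecomposition f₂ S) : HasLocalDecomposition (fun x => f₁ x + f₂ x) S := by
  obtain ⟨g₁, hsum₁, hdep₁⟩ := h₁
  obtain ⟨g₂, hsum₂, hdep₂⟩ := h₂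
  refine ⟨fun t x => g₁ t x + g₂ t x, fun x => ?_, fun t x y hxy => ?_⟩
  · simp only [hsum₁, hsum₂, sum_add_distrib]
  · simp only [hdep₁ t hxy, hdep₂ t hxy]

lemma finset_sum {κ : Type*} (s : Finset κ) {f : κ → (ι → R) → M}
    (h : ∀ j ∈ s, HasLocalDecomposition (f j) S) :
    HasLocalDecomposition (fun x => ∑ j ∈ s, f j x) S := by
  classical
  induction s using Finset.induction_on with
  | empty => simpa using zero
  | insert j s hj ih =>
    simp only [sum_insert hj]
    exact add (h j (mem_insert_self j s)) (ih fun j' hj' => h j' (mem_insert_of_mem hj'))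

lemma of_dependsOn {f : (ι → R) → M} (t₀ : τ) (hf : DependsOn f (S t₀)) :
    HasLocalDecomposition f S := by
  classical
  refine ⟨fun t x => if t = t₀ then f x else 0, fun x => by simp, fun t x y hxy => ?_⟩
  by_cases ht : t = t₀
  · subst ht
    simp only [if_true, hf hxy]
  · simp only [ht, if_false]

lemma equiv {f : (ι → R) → M} (e : τ ≃ τ') (h : HasLocalDecomposition f S) :
    HasLocalDecomposition f (S ∘ e.symm) := by
  obtain ⟨g, hsum, hdep⟩ := h
  exact ⟨g ∘ e.symm, fun x => (hsum x).trans (e.symm.sum_comp (g · x)).symm, fun t => hdep _⟩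

end HasLocalDecomposition

lemma Sym2.exists_not_isDiag_mem_mem {α : Type*} [Nontrivial α] (a b : α) :
    ∃ z : Sym2 α, ¬z.IsDiag ∧ a ∈ z ∧ b ∈ z := by
  by_cases hab : a = b
  · obtain ⟨c, hc⟩ := exists_ne a
    exact ⟨s(a, c), Sym2.mk_isDiag_iff.not.2 hc.symm, Sym2.mem_mk_left a c,
      hab ▸ Sym2.mem_mk_left a c⟩
  · exact ⟨s(a, b), Sym2.mk_isDiag_iff.not.2 hab, Sym2.mem_mk_left a b, Sym2.mem_mk_right a b⟩

section BlockPairs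

variable {ι B : Type*} [Fintype ι] [DecidableEq B]

def blockPairSupport (blk : ι → B) (z : Sym2 B) : Finset ι :=
  {i | blk i ∈ z}

lemma card_blockPairSupport_le (blk : ι → B) {k : ℕ} (hblk : ∀ b, #{i | blk i = b} ≤ k)
    (z : Sym2 B) : #(blockPairSupport blk z) ≤ 2 * k := by
  classical
  induction z using Sym2.ind with
  | h b c =>
    calc #(blockPairSupport blk s(b, c)) =
          #(({i | blk i = b} : Finset ι) ∪ ({i | blk i = c} : Finset ι)) := by
          simp only [blockPairSupport, Sym2.mem_iff, filter_or]
      _ ≤ k + k := (card_union_le _ _).trans (add_le_add (hblk b) (hblk c))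
      _ = 2 * k := (two_mul k).symm

variable {R M : Type*} [AddCommMonoid M] [Nontrivial B] [Fintype B]

lemma hasLocalDecomposition_of_dependsOn_pair (blk : ι → B) {f : (ι → R) → M} {i j : ι}
    (hf : DependsOn f {i, j}) :
    HasLocalDecomposition f
      fun z : {z : Sym2 B // ¬z.IsDiag} => (blockPairSupport blk z : Set ι) := by
  obtain ⟨z, hz, hi, hj⟩ := Sym2.exists_not_isDiag_mem_mem (blk i) (blk j)
  refine .of_dependsOn ⟨z, hz⟩ (hf.mono ?_)
  simp [Set.insert_subset_iff, blockPairSupport, hi, hj]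

theorem hasLocalDecomposition_quadratic [Semiring R] (blk : ι → B) (P : Finset (ι × ι))
    (a : ι → ι → R) (b : ι → R) :
    HasLocalDecomposition
      (fun x : ι → R => ∑ p ∈ P, a p.1 p.2 * x p.1 * x p.2 + ∑ i, b i * x i)
      fun z : {z : Sym2 B // ¬z.IsDiag} => (blockPairSupport blk z : Set ι) := by
  refine .add (.finset_sum P fun p _ => ?_) (.finset_sum univ fun i _ => ?_)
  · refine hasLocalDecomposition_of_dependsOn_pair blk (i := p.1) (j := p.2) fun x y hxy => ?_
    rw [hxy p.1 (by simp), hxy p.2 (by simp)]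
  · refine hasLocalDecomposition_of_dependsOn_pair blk (i := i) (j := i) fun x y hxy => ?_
    rw [hxy i (by simp)]

end BlockPairs

lemma card_filter_fst_equiv_eq {ι B K : Type*} [Fintype ι] [Fintype B] [Fintype K]
    [DecidableEq B] (e : ι ≃ B × K) (b : B) : #{i | (e i).1 = b} = Fintype.card K := by
  rw [card_equiv e (t := {b} ×ˢ univ) fun i => by simp [Prod.ext_iff, eq_comm]]
  simp

theorem quadratic_decomposes_into_local_functions_general
    (k s n m : ℕ) (hs : 1 ≤ s)
    (hn : n = 2 * k * s) (hm : m = s * (2 * s - 1))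
    (a : Fin n → Fin n → ZMod 2) (b : Fin n → ZMod 2)
    (f : (Fin n → ZMod 2) → ZMod 2)
    (hf : ∀ x : Fin n → ZMod 2,
      f x = (∑ p ∈ Finset.univ.filter (fun p : Fin n × Fin n => p.1 < p.2),
              a p.1 p.2 * x p.1 * x p.2) + ∑ i : Fin n, b i * x i) :
    ∃ (S : Fin m → Finset (Fin n))
      (g : Fin m → (Fin n → ZMod 2) → ZMod 2),
      (∀ t : Fin m, (S t).card ≤ 2 * k) ∧
      (∀ x : Fin n → ZMod 2, f x = ∑ t : Fin m, g t x) ∧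
      (∀ t : Fin m, ∀ u v : Fin n → ZMod 2,
        (∀ i ∈ S t, u i = v i) → g t u = g t v) := by
  subst hn hm
  let halves : Fin (2 * k * s) ≃ Fin (2 * s) × Fin k :=
    (finProdFinEquiv.trans (finCongr (by ring))).symm
  have : Nontrivial (Fin (2 * s)) := Fin.nontrivial_iff_two_le.2 (by omega)
  have hpairs : Fintype.card {z : Sym2 (Fin (2 * s)) // ¬z.IsDiag} = s * (2 * s - 1) := by
    rw [Sym2.card_subtype_not_diag, Fintype.card_fin, Nat.choose_two_right, mul_assoc,
      Nat.mul_div_cancel_left _ two_pos]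
  let e := Fintype.equivFinOfCardEq hpairs
  obtain ⟨g, hsum, hdep⟩ :=
    (hasLocalDecomposition_quadratic (fun i => (halves i).1) _ a b).equiv e
  refine ⟨fun t => blockPairSupport (fun i => (halves i).1) (e.symm t), g, fun t => ?_,
    fun x => (hf x).trans (hsum x), fun t u v huv => hdep t huv⟩
  simpa using card_blockPairSupport_le _ (fun c => (card_filter_fst_equiv_eq halves c).le) _

/-- Any quadratic polynomial function over GF(2) in `n = 2·k·s`
variables decomposes as a sum of `m = s·(2s − 1)` functions, each depending
only on a set of at most `2·k` coordinates. -/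
theorem quadratic_decomposes_into_local_functions
    (k s n m : ℕ) (hk : 1 ≤ k) (hs : 1 ≤ s)
    (hn : n = 2 * k * s) (hm : m = s * (2 * s - 1))
    (a : Fin n → Fin n → ZMod 2) (b : Fin n → ZMod 2)
    (f : (Fin n → ZMod 2) → ZMod 2)
    (hf : ∀ x : Fin n → ZMod 2,
      f x = (∑ p ∈ Finset.univ.filter (fun p : Fin n × Fin n => p.1 < p.2),
              a p.1 p.2 * x p.1 * x p.2) + ∑ i : Fin n, b i * x i) :
    ∃ (S : Fin m → Finset (Fin n))
      (g : Fin m → (Fin n → ZMod 2) → ZMod 2),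
      (∀ t : Fin m, (S t).card ≤ 2 * k) ∧
      (∀ x : Fin n → ZMod 2, f x = ∑ t : Fin m, g t x) ∧
      (∀ t : Fin m, ∀ u v : Fin n → ZMod 2,
        (∀ i ∈ S t, u i = v i) → g t u = g t v) :=
  quadratic_decomposes_into_local_functions_general k s n m hs hn hm a b f hf
end

section
/- For every output string y : Fin (2^(l-1)) → ZMod 2, the map r ↦ q(r) is a bijection from the set of preimages {r : Fin (2^(l-h)) → Fin (2^h) | w_A r = y} onto the solution set of the following system in the 2^l unknowns q : Fin (2^(l-h)) → Fin (2^h) → ZMod 2: (linear equations, 2^(l-1) of them) for every t : Fin (2^(l-1)), ∑_{b} ∑_{j} A t b j * q b j = y t; (block-sum linear equations, 2^(l-h) of them) for every b, ∑_{j} q b j = 1; and (parity-restricted quadratic equations, 2^(l-1)·(2^(h-1) − 1) of them in total) for every b and every pair j ≠ j' in Fin (2^h) with j.val % 2 = j'.val % 2, q b j * q b j' = 0. Hence inverting the w function on y is equivalent to solving a system over GF(2) with 2^l unknowns, 2^(l-1) + 2^(l-h) linear equations, and 2^(l-1)·(2^(h-1) − 1) quadratic equations. -/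
/-!
The indicator encoding is injective and sends preimages of `y` to solutions, since
`∑ j, A t b j * q(r) b j = A t b (r b)`. Conversely, over `GF(2)` a block `q b` sums to the
parity of its support; the quadratic equations allow at most one support element of each
parity, so the support has odd size at most two, i.e. `q b` is the indicator of a single index.
-/

open Finset

namespace ZMod

variable {κ : Type*} [Fintype κ]

theorem two_sum_eq_card_ne_zero (v : κ → ZMod 2) : ∑ j, v j = #{j | v j ≠ 0} := by
  rw [← sum_boole]
  refine sum_congr rfl fun j _ => ?_
  generalize v j = x
  fin_cases x <;> rfl

theorem two_exists_eq_ite_of_sum_eq_one [DecidableEq κ] {β : Type*} [Fintype β]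
    (hβ : Fintype.card β ≤ 2) (p : κ → β) {v : κ → ZMod 2} (hsum : ∑ j, v j = 1)
    (hmul : ∀ j j', j ≠ j' → p j = p j' → v j * v j' = 0) :
    ∃ i, v = fun j => if j = i then 1 else 0 := by
  set s : Finset κ := {j | v j ≠ 0} with hs
  have hodd : Odd #s := ZMod.natCast_eq_one_iff_odd.1 (hsum ▸ (two_sum_eq_card_ne_zero v).symm)
  have hinj : Set.InjOn p s := fun j hj j' hj' hp => by
    by_contra hne
    simp only [hs, coe_filter, mem_univ, true_and, Set.mem_ofPred_eq] at hj hj'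
    exact mul_ne_zero hj hj' (hmul j j' hne hp)
  have hle : #s ≤ 2 :=
    (card_le_card_of_injOn p (fun _ _ => mem_univ _) hinj).trans (by simpa using hβ)
  obtain ⟨i, hi⟩ := card_eq_one.1 (show #s = 1 by obtain ⟨k, hk⟩ := hodd; omega)
  refine ⟨i, funext fun j => ?_⟩
  have hj : v j ≠ 0 ↔ j = i := by simpa [hs] using congrArg (j ∈ ·) hi
  split_ifs with h
  · exact (by decide : ∀ x : ZMod 2, x ≠ 0 → x = 1) _ (hj.2 h)
  · exact not_not.1 (mt hj.1 h)

end ZMod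

theorem w_inversion_equiv_system_general
    (h l : ℕ)
    (A : Fin (2 ^ (l - 1)) → Fin (2 ^ (l - h)) → Fin (2 ^ h) → ZMod 2)
    (y : Fin (2 ^ (l - 1)) → ZMod 2) :
    Set.BijOn
      (fun (r : Fin (2 ^ (l - h)) → Fin (2 ^ h)) =>
        fun (b : Fin (2 ^ (l - h))) (j : Fin (2 ^ h)) =>
          if j = r b then (1 : ZMod 2) else 0)
      {r : Fin (2 ^ (l - h)) → Fin (2 ^ h) |
        (fun t : Fin (2 ^ (l - 1)) =>
          ∑ b : Fin (2 ^ (l - h)), A t b (r b)) = y}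
      {q : Fin (2 ^ (l - h)) → Fin (2 ^ h) → ZMod 2 |
        (∀ t : Fin (2 ^ (l - 1)),
          ∑ b : Fin (2 ^ (l - h)), ∑ j : Fin (2 ^ h), A t b j * q b j = y t) ∧
        (∀ b : Fin (2 ^ (l - h)), ∑ j : Fin (2 ^ h), q b j = 1) ∧
        (∀ b : Fin (2 ^ (l - h)), ∀ j j' : Fin (2 ^ h),
          j ≠ j' → j.val % 2 = j'.val % 2 → q b j * q b j' = 0)} := by
  refine ⟨fun r hr => ⟨fun t => by simpa using congrFun hr t, fun b => by simp, ?_⟩, ?_, ?_⟩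
  · intro b j j' hne _
    dsimp only
    split_ifs with hj hj' <;> simp_all
  · intro r₁ _ r₂ _ heq
    funext b
    simpa using congrFun (congrFun heq b) (r₁ b)
  · rintro q ⟨hlin, hsum, hmul⟩
    choose r hr using fun b => ZMod.two_exists_eq_ite_of_sum_eq_one (ZMod.card 2).le
      (fun j : Fin (2 ^ h) => (j.val : ZMod 2)) (hsum b)
      fun j j' hne hp => hmul b j j' hne ((ZMod.natCast_eq_natCast_iff' _ _ 2).1 hp)
    refine ⟨r, funext fun t => ?_, (funext hr).symm⟩
    simpa [hr] using hlin t

/-- Inverting the `w` function on an output `y` is equivalent,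
via the indicator encoding `q`, to solving a system over GF(2) with `2^l`
unknowns, `2^(l-1) + 2^(l-h)` linear equations, and
`2^(l-1) * (2^(h-1) - 1)` parity-restricted quadratic equations. -/
theorem w_inversion_equiv_system
    (h l : ℕ) (hh : 1 ≤ h) (hl : h < l)
    (A : Fin (2 ^ (l - 1)) → Fin (2 ^ (l - h)) → Fin (2 ^ h) → ZMod 2)
    (y : Fin (2 ^ (l - 1)) → ZMod 2) :
    Set.BijOn
      (fun (r : Fin (2 ^ (l - h)) → Fin (2 ^ h)) =>
        fun (b : Fin (2 ^ (l - h))) (j : Fin (2 ^ h)) =>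
          if j = r b then (1 : ZMod 2) else 0)
      {r : Fin (2 ^ (l - h)) → Fin (2 ^ h) |
        (fun t : Fin (2 ^ (l - 1)) =>
          ∑ b : Fin (2 ^ (l - h)), A t b (r b)) = y}
      {q : Fin (2 ^ (l - h)) → Fin (2 ^ h) → ZMod 2 |
        (∀ t : Fin (2 ^ (l - 1)),
          ∑ b : Fin (2 ^ (l - h)), ∑ j : Fin (2 ^ h), A t b j * q b j = y t) ∧
        (∀ b : Fin (2 ^ (l - h)), ∑ j : Fin (2 ^ h), q b j = 1) ∧
        (∀ b : Fin (2 ^ (l - h)), ∀ j j' : Fin (2 ^ h),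
          j ≠ j' → j.val % 2 = j'.val % 2 → q b j * q b j' = 0)} :=
  w_inversion_equiv_system_general h l A y
end
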